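/- Let K > 1 be an integer, let b_0, b_1, b_2 be nonnegative reals, and let x_1, x_2 be arbitrary reals. Then there exist reals y_1 and y_2 such that b_0·b_1·f(x_1, y_1) + b_0·b_2·f(x_2, y_2) + b_1·b_2·f(x_2 − x_1, y_2 − y_1) ≤ 0. -/

import Mathlib

open Real Finset

/-- `f(x, y) = ∑_{k=0}^{K−1} cos(y − 2kx)`. -/
noncomputable def f (K : ℕ) (x y : ℝ) : ℝ :=
  ∑ k ∈ Finset.range K, Real.cos (y - 2 * (k : ℝ) * x)

/- At `(y₁, y₂) = (0, 0), (0, c), (c, c), (c, 2c)` the three terms take the sign patterns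
`+++`, `+--`, `--+`, `-+-` relative to their values at `0`, so the four sums add up to zero. -/
theorem Function.Antiperiodic.exists_add_add_sub_nonpos {α β : Type*} [AddGroup α]
    [AddCommGroup β] [LinearOrder β] [IsOrderedAddMonoid β] {g₁ g₂ g₃ : α → β} {c : α}
    (h₁ : Function.Antiperiodic g₁ c) (h₂ : Function.Antiperiodic g₂ c)
    (h₃ : Function.Antiperiodic g₃ c) :
    ∃ y₁ y₂, g₁ y₁ + g₂ y₂ + g₃ (y₂ - y₁) ≤ 0 := by
  by_contra! h
  have hsum := add_pos (add_pos (h 0 0) (h 0 c)) (add_pos (h c c) (h c (c + c)))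
  simp only [sub_self, sub_zero, add_sub_cancel_right, h₂ c, h₁.eq, h₂.eq, h₃.eq, neg_neg]
    at hsum
  abel_nf at hsum
  exact lt_irrefl 0 hsum

theorem f_antiperiodic (K : ℕ) (x : ℝ) : Function.Antiperiodic (f K x) π := fun y => by
  simp only [f, ← sum_neg_distrib]
  exact sum_congr rfl fun k _ => cos_antiperiodic.sub_const _ y

theorem stmt_13_general (K : ℕ)
    (b₀ b₁ b₂ : ℝ)
    (x₁ x₂ : ℝ) :
    ∃ y₁ y₂ : ℝ,
      b₀ * b₁ * f K x₁ y₁ + b₀ * b₂ * f K x₂ y₂ +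
        b₁ * b₂ * f K (x₂ - x₁) (y₂ - y₁) ≤ 0 :=
  ((f_antiperiodic K x₁).smul (b₀ * b₁)).exists_add_add_sub_nonpos
    ((f_antiperiodic K x₂).smul (b₀ * b₂)) ((f_antiperiodic K (x₂ - x₁)).smul (b₁ * b₂))

/-- for `K > 1`, nonnegative `b₀, b₁, b₂`, and arbitrary reals `x₁, x₂`,
there exist `y₁, y₂` such that
`b₀b₁·f(x₁, y₁) + b₀b₂·f(x₂, y₂) + b₁b₂·f(x₂ − x₁, y₂ − y₁) ≤ 0`. -/
theorem stmt_13 (K : ℕ) (hK : 1 < K)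
    (b₀ b₁ b₂ : ℝ) (hb₀ : 0 ≤ b₀) (hb₁ : 0 ≤ b₁) (hb₂ : 0 ≤ b₂)
    (x₁ x₂ : ℝ) :
    ∃ y₁ y₂ : ℝ,
      b₀ * b₁ * f K x₁ y₁ + b₀ * b₂ * f K x₂ y₂ +
        b₁ * b₂ * f K (x₂ - x₁) (y₂ - y₁) ≤ 0 :=
  stmt_13_general K b₀ b₁ b₂ x₁ x₂
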